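/- Let C be a symmetric monoidal category with finite biproducts such that the tensor product preserves finite biproducts in each variable, and let n be a natural number. Then the n-fold biproduct 1^{⊕ n} of copies of the monoidal unit carries a commutative separable monoid object structure, where the multiplication 1^{⊕ n} ⊗ 1^{⊕ n} → 1^{⊕ n} is induced (via the distributivity isomorphism 1^{⊕ n} ⊗ 1^{⊕ n} ≅ (1 ⊗ 1)^{⊕ n²} ≅ 1^{⊕ n²}) by projecting onto the diagonal components, the unit 1 → 1^{⊕ n} is the diagonal morphism, and the separability section 1^{⊕ n} → 1^{⊕ n} ⊗ 1^{⊕ n} is the inclusion of the diagonal components. -/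

import Mathlib

/-!
Every projection `π j : 1^{⊕ J} ⟶ 1` turns the multiplication into the left unitor of `1`,
`μ ≫ π j = (π j ⊗ π j) ≫ λ`, i.e. it is a morphism onto the trivial monoid `1`. The projections
being jointly monic, associativity, unitality and commutativity are inherited from `1`.

On the other side, `(ι i ▷ 1^{⊕ J}) ≫ μ = λ ≫ π i ≫ ι i`. As the tensor product preserves
biproducts, the whiskered injections `ι i ▷ 1^{⊕ J}` (resp. `1^{⊕ J} ◁ ι i`) are jointly epic,
and after precomposing with them both bilinearity identities reduce to monoidal coherence.
-/

open CategoryTheory CategoryTheory.Limits CategoryTheory.MonoidalCategory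

universe v u

theorem CategoryTheory.Limits.biproduct.hom_ext'_map {C : Type*} [Category C] [HasZeroMorphisms C]
    {D : Type*} [Category D] [HasZeroMorphisms D] {J : Type*} {f : J → C} [HasBiproduct f]
    (F : C ⥤ D) [F.PreservesZeroMorphisms] [PreservesBiproduct f F] {Y : D}
    {g h : F.obj (⨁ f) ⟶ Y} (w : ∀ j, F.map (biproduct.ι f j) ≫ g = F.map (biproduct.ι f j) ≫ h) :
    g = h :=
  (isBilimitOfPreserves F (biproduct.isBilimit f)).isColimit.hom_ext fun ⟨j⟩ => w j

namespace CategoryTheory.MonoidalCategory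

variable {C : Type u} [Category.{v} C] [MonoidalCategory C] [HasZeroMorphisms C]

theorem zero_tensorHom {A B X Y : C} [(tensorRight X).PreservesZeroMorphisms] (g : X ⟶ Y) :
    (0 : A ⟶ B) ⊗ₘ g = 0 := by
  rw [tensorHom_def, show (0 : A ⟶ B) ▷ X = 0 from (tensorRight X).map_zero A B, zero_comp]

theorem tensorHom_zero {A B X Y : C} [(tensorLeft A).PreservesZeroMorphisms] (f : A ⟶ B) :
    f ⊗ₘ (0 : X ⟶ Y) = 0 := by
  rw [tensorHom_def', show A ◁ (0 : X ⟶ Y) = 0 from (tensorLeft A).map_zero X Y, zero_comp]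

end CategoryTheory.MonoidalCategory

namespace unitBiproduct

variable (C : Type u) [Category.{v} C] [MonoidalCategory C] [HasZeroMorphisms C]
  (J : Type*) [HasBiproduct fun _ : J => 𝟙_ C]

local notation "𝟙⊕" => ⨁ fun _ : J => 𝟙_ C

noncomputable def one : 𝟙_ C ⟶ 𝟙⊕ :=
  biproduct.lift fun _ => 𝟙 (𝟙_ C)

noncomputable def mul : 𝟙⊕ ⊗ 𝟙⊕ ⟶ 𝟙⊕ :=
  biproduct.lift fun j => (biproduct.π _ j ⊗ₘ biproduct.π _ j) ≫ (λ_ (𝟙_ C)).hom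

noncomputable def mulSection : 𝟙⊕ ⟶ 𝟙⊕ ⊗ 𝟙⊕ :=
  biproduct.desc fun j =>
    (λ_ (𝟙_ C)).inv ≫ (biproduct.ι (fun _ : J => 𝟙_ C) j ⊗ₘ biproduct.ι (fun _ : J => 𝟙_ C) j)

variable {C J}

@[simp]
theorem one_π (j : J) : one C J ≫ biproduct.π _ j = 𝟙 (𝟙_ C) :=
  biproduct.lift_π _ j

@[simp]
theorem mul_π (j : J) :
    mul C J ≫ biproduct.π _ j = (biproduct.π _ j ⊗ₘ biproduct.π _ j) ≫ (λ_ (𝟙_ C)).hom :=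
  biproduct.lift_π _ j

@[simp]
theorem ι_mulSection (j : J) :
    biproduct.ι _ j ≫ mulSection C J =
      (λ_ (𝟙_ C)).inv ≫ (biproduct.ι (fun _ : J => 𝟙_ C) j ⊗ₘ biproduct.ι (fun _ : J => 𝟙_ C) j) :=
  biproduct.ι_desc _ j

theorem one_whiskerRight_mul : (one C J ▷ 𝟙⊕) ≫ mul C J = (λ_ 𝟙⊕).hom := by
  refine biproduct.hom_ext _ _ fun k => ?_
  simp [whiskerRight_comp_tensorHom_assoc]

theorem whiskerLeft_one_mul : (𝟙⊕ ◁ one C J) ≫ mul C J = (ρ_ 𝟙⊕).hom := by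
  refine biproduct.hom_ext _ _ fun k => ?_
  simp [whiskerLeft_comp_tensorHom_assoc, unitors_equal]

theorem mul_assoc :
    (mul C J ▷ 𝟙⊕) ≫ mul C J = (α_ _ _ _).hom ≫ (𝟙⊕ ◁ mul C J) ≫ mul C J := by
  refine biproduct.hom_ext _ _ fun k => ?_
  simp only [Category.assoc, mul_π, whiskerRight_comp_tensorHom_assoc,
    whiskerLeft_comp_tensorHom_assoc]
  monoidal

theorem braiding_mul [BraidedCategory C] : (β_ 𝟙⊕ 𝟙⊕).hom ≫ mul C J = mul C J := by
  refine biproduct.hom_ext _ _ fun k => ?_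
  simp [← BraidedCategory.braiding_naturality_assoc, unitors_equal, unitors_inv_equal]

theorem ι_whiskerRight_mul [(tensorRight 𝟙⊕).PreservesZeroMorphisms] (i : J) :
    (biproduct.ι _ i ▷ 𝟙⊕) ≫ mul C J =
      (λ_ 𝟙⊕).hom ≫ biproduct.π _ i ≫ biproduct.ι (fun _ : J => 𝟙_ C) i := by
  refine biproduct.hom_ext _ _ fun k => ?_
  simp only [Category.assoc, mul_π, whiskerRight_comp_tensorHom_assoc]
  rcases eq_or_ne i k with rfl | hik
  · simp
  · simp [biproduct.ι_π_ne _ hik, zero_tensorHom]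

theorem whiskerLeft_ι_mul [(tensorLeft 𝟙⊕).PreservesZeroMorphisms] (i : J) :
    (𝟙⊕ ◁ biproduct.ι _ i) ≫ mul C J =
      (ρ_ 𝟙⊕).hom ≫ biproduct.π _ i ≫ biproduct.ι (fun _ : J => 𝟙_ C) i := by
  refine biproduct.hom_ext _ _ fun k => ?_
  simp only [Category.assoc, mul_π, whiskerLeft_comp_tensorHom_assoc]
  rcases eq_or_ne i k with rfl | hik
  · simp [unitors_equal]
  · simp [biproduct.ι_π_ne _ hik, tensorHom_zero]

theorem mulSection_mul [(tensorRight 𝟙⊕).PreservesZeroMorphisms] :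
    mulSection C J ≫ mul C J = 𝟙 𝟙⊕ := by
  refine biproduct.hom_ext' _ _ fun k => ?_
  rw [reassoc_of% ι_mulSection k, tensorHom_def', Category.assoc, ι_whiskerRight_mul,
    leftUnitor_naturality_assoc, Iso.inv_hom_id_assoc, biproduct.ι_π_self_assoc, Category.comp_id]

theorem mulSection_whiskerRight_mul [(tensorRight 𝟙⊕).PreservesZeroMorphisms]
    [PreservesBiproduct (fun _ : J => 𝟙_ C) (tensorRight 𝟙⊕)] :
    (mulSection C J ▷ 𝟙⊕) ≫ (α_ _ _ _).hom ≫ (𝟙⊕ ◁ mul C J) = mul C J ≫ mulSection C J := by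
  refine biproduct.hom_ext'_map (tensorRight 𝟙⊕) fun i => ?_
  dsimp only [Functor.flip_obj_obj, curriedTensor_obj_obj, Functor.flip_obj_map,
    curriedTensor_map_app]
  rw [← comp_whiskerRight_assoc, ι_mulSection, reassoc_of% ι_whiskerRight_mul, ι_mulSection,
    tensorHom_def']
  simp only [comp_whiskerRight, Category.assoc, associator_naturality_left_assoc,
    ← whisker_exchange, associator_naturality_middle_assoc, ← whiskerLeft_comp_assoc,
    ι_whiskerRight_mul]
  monoidal

theorem whiskerLeft_mulSection_mul [(tensorLeft 𝟙⊕).PreservesZeroMorphisms]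
    [PreservesBiproduct (fun _ : J => 𝟙_ C) (tensorLeft 𝟙⊕)] :
    (𝟙⊕ ◁ mulSection C J) ≫ (α_ _ _ _).inv ≫ (mul C J ▷ 𝟙⊕) = mul C J ≫ mulSection C J := by
  refine biproduct.hom_ext'_map (tensorLeft 𝟙⊕) fun i => ?_
  dsimp only [curriedTensor_obj_obj, curriedTensor_obj_map]
  rw [← whiskerLeft_comp_assoc, ι_mulSection, reassoc_of% whiskerLeft_ι_mul, ι_mulSection,
    MonoidalCategory.tensorHom_def]
  simp only [whiskerLeft_comp, Category.assoc, associator_inv_naturality_right_assoc,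
    whisker_exchange, associator_inv_naturality_middle_assoc, ← comp_whiskerRight_assoc,
    whiskerLeft_ι_mul]
  monoidal

end unitBiproduct

/-- In a symmetric monoidal category with finite biproducts, in which the tensor
product preserves finite biproducts in each variable, the `n`-fold biproduct
`1^{⊕ n}` of copies of the monoidal unit is a commutative separable monoid
object: the multiplication `1^{⊕ n} ⊗ 1^{⊕ n} ⟶ 1^{⊕ n}` is given (via the
distributivity isomorphism) by projecting onto the diagonal components, i.e. its
`j`-th component is `π_j ⊗ π_j` followed by the unitor; the unit `1 ⟶ 1^{⊕ n}`
is the diagonal morphism; and the separability section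
`1^{⊕ n} ⟶ 1^{⊕ n} ⊗ 1^{⊕ n}` is the inclusion of the diagonal components,
i.e. its `j`-th component is the inverse unitor followed by `ι_j ⊗ ι_j`. -/
theorem unit_biproduct_commutative_separable_monoid
    {C : Type u} [Category.{v} C] [MonoidalCategory C] [SymmetricCategory C]
    [HasZeroMorphisms C] [HasFiniteBiproducts C]
    [∀ X : C, (tensorLeft X).PreservesZeroMorphisms]
    [∀ X : C, (tensorRight X).PreservesZeroMorphisms]
    [∀ X : C, PreservesFiniteBiproducts (tensorLeft X)]
    [∀ X : C, PreservesFiniteBiproducts (tensorRight X)]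
    (n : ℕ) :
    ∀ (eta : 𝟙_ C ⟶ ⨁ fun _ : Fin n => 𝟙_ C)
      (mu : (⨁ fun _ : Fin n => 𝟙_ C) ⊗ (⨁ fun _ : Fin n => 𝟙_ C) ⟶ ⨁ fun _ : Fin n => 𝟙_ C)
      (sig : (⨁ fun _ : Fin n => 𝟙_ C) ⟶ (⨁ fun _ : Fin n => 𝟙_ C) ⊗ ⨁ fun _ : Fin n => 𝟙_ C),
      -- the unit is the diagonal morphism:
      eta = biproduct.lift (fun _ => 𝟙 (𝟙_ C)) →
      -- the multiplication projects onto the diagonal components: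
      mu = biproduct.lift (fun j =>
        (biproduct.π (fun _ : Fin n => 𝟙_ C) j ⊗ₘ biproduct.π (fun _ : Fin n => 𝟙_ C) j) ≫
          (λ_ (𝟙_ C)).hom) →
      -- the section is the inclusion of the diagonal components:
      sig = biproduct.desc (fun j =>
        (λ_ (𝟙_ C)).inv ≫
          (biproduct.ι (fun _ : Fin n => 𝟙_ C) j ⊗ₘ biproduct.ι (fun _ : Fin n => 𝟙_ C) j)) →
      -- monoid object axioms:
      ((eta ▷ _) ≫ mu = (λ_ (⨁ fun _ : Fin n => 𝟙_ C)).hom ∧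
       (_ ◁ eta) ≫ mu = (ρ_ (⨁ fun _ : Fin n => 𝟙_ C)).hom ∧
       (mu ▷ _) ≫ mu = (α_ _ _ _).hom ≫ (_ ◁ mu) ≫ mu) ∧
      -- commutativity:
      (β_ (⨁ fun _ : Fin n => 𝟙_ C) (⨁ fun _ : Fin n => 𝟙_ C)).hom ≫ mu = mu ∧
      -- separability: `sig` is a bilinear section of `mu`:
      (sig ≫ mu = 𝟙 (⨁ fun _ : Fin n => 𝟙_ C) ∧
       (sig ▷ _) ≫ (α_ _ _ _).hom ≫ (_ ◁ mu) = mu ≫ sig ∧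
       mu ≫ sig = (_ ◁ sig) ≫ (α_ _ _ _).inv ≫ (mu ▷ _)) := by
  intro eta mu sig h_eta h_mu h_sig
  obtain rfl : eta = unitBiproduct.one C (Fin n) := h_eta
  obtain rfl : mu = unitBiproduct.mul C (Fin n) := h_mu
  obtain rfl : sig = unitBiproduct.mulSection C (Fin n) := h_sig
  exact ⟨⟨unitBiproduct.one_whiskerRight_mul, unitBiproduct.whiskerLeft_one_mul,
      unitBiproduct.mul_assoc⟩,
    unitBiproduct.braiding_mul, unitBiproduct.mulSection_mul,
    unitBiproduct.mulSection_whiskerRight_mul, unitBiproduct.whiskerLeft_mulSection_mul.symm⟩
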